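/- arXiv:2512.18327 — 2 statements merged into one kernel-verified Lean document; each statement's English description precedes it below -/
import Mathlib

section
/- Let K be a field, V a K-vector space, θ : V → V a K-linear endomorphism, F a finite set of pairwise distinct monic irreducible polynomials over K, and c : F → ℕ with c(f) ≥ 1 for all f ∈ F. Assume that for every f ∈ F one has ker((f^{c(f)})(θ)) = ker((f^{c(f)+1})(θ)) and range((f^{c(f)})(θ)) = range((f^{c(f)+1})(θ)). Then V decomposes as the internal direct sum V = range((∏_{f∈F} f^{c(f)})(θ)) ⊕ ⨁_{f∈F} ker((f^{c(f)})(θ)); in particular the submodules range((∏_{f∈F} f^{c(f)})(θ)) and ker((f^{c(f)})(θ)) for f ∈ F form an independent family whose sup is all of V. -/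
/-!
Write `P = ∏_{f ∈ F} f ^ c(f)`. Kernel and image stabilization for each `f` say that
`T = (f ^ c(f))(θ)` satisfies `ker T² ≤ ker T` and `range T ≤ range T²`, and both conditions
pass to products of commuting endomorphisms, hence to `P(θ)`. An endomorphism with these two
properties splits the space as `range T ⊕ ker T`. Independence of the whole family then follows
from the fact that each member is disjoint from a submodule containing all the others:
`range P(θ)` from `ker P(θ)`, and `ker (f ^ c(f))(θ)` from `range (f ^ c(f))(θ)`, which contains
`range P(θ)` since `f ^ c(f) ∣ P` and every `ker (g ^ c(g))(θ)`, `g ≠ f`, by coprimality.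
-/

open Polynomial LinearMap

theorem iSupIndep_of_disjoint_of_le {α ι : Type*} [CompleteLattice α] {t u : ι → α}
    (hdisj : ∀ i, Disjoint (t i) (u i)) (hle : ∀ i j, i ≠ j → t j ≤ u i) : iSupIndep t :=
  fun i => (hdisj i).mono_right (iSup₂_le fun j hj => hle i j (Ne.symm hj))

namespace Module.End

variable {R M : Type*} [Semiring R] [AddCommGroup M] [Module R M]

theorem disjoint_range_ker_of_ker_mul_self_le {T : Module.End R M} (h : ker (T * T) ≤ ker T) :
    Disjoint (range T) (ker T) := by
  rw [disjoint_iff_inf_le]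
  rintro _ ⟨⟨y, rfl⟩, hy⟩
  exact (Submodule.mem_bot R).2 (h hy)

theorem range_sup_ker_eq_top_of_range_le_range_mul_self {T : Module.End R M}
    (h : range T ≤ range (T * T)) : range T ⊔ ker T = ⊤ := by
  refine eq_top_iff.2 fun x _ => ?_
  obtain ⟨y, hy⟩ := h (mem_range_self T x)
  refine Submodule.mem_sup.2 ⟨T y, mem_range_self T y, x - T y, ?_, add_sub_cancel _ _⟩
  rw [mem_ker, map_sub, ← hy, mul_apply, sub_self]

theorem _root_.Commute.ker_mul_mul_self_le {A B : Module.End R M} (hAB : Commute A B)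
    (hA : ker (A * A) ≤ ker A) (hB : ker (B * B) ≤ ker B) :
    ker (A * B * (A * B)) ≤ ker (A * B) := by
  intro x hx
  have hBBx : (B * B) x ∈ ker (A * A) := by
    rwa [mem_ker, ← mul_apply, ← hAB.symm.mul_mul_mul_comm]
  have hAx : A x ∈ ker (B * B) := by
    rw [mem_ker, ← mul_apply, (hAB.symm.mul_left hAB.symm).eq, mul_apply, hA hBBx]
  rw [mem_ker, mul_apply, ← mul_apply, hAB.eq, mul_apply, hB hAx]

theorem _root_.Commute.range_mul_le_range_mul_mul_self {A B : Module.End R M} (hAB : Commute A B)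
    (hA : range A ≤ range (A * A)) (hB : range B ≤ range (B * B)) :
    range (A * B) ≤ range (A * B * (A * B)) := by
  rintro _ ⟨x, rfl⟩
  obtain ⟨y, hy⟩ := hB (mem_range_self B x)
  obtain ⟨z, hz⟩ := hA (mem_range_self A y)
  have hBA : Commute (B * B) A := hAB.symm.mul_left hAB.symm
  refine ⟨z, ?_⟩
  calc (A * B * (A * B)) z = (B * B) ((A * A) z) := by
        rw [hAB.symm.mul_mul_mul_comm, ← (hBA.mul_right hBA).eq, mul_apply]
    _ = A (B x) := by rw [hz, ← mul_apply, hBA.eq, mul_apply, hy]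

theorem range_pow_constant {T : Module.End R M} {k : ℕ}
    (h : range (T ^ k) = range (T ^ (k + 1))) (m : ℕ) : range (T ^ k) = range (T ^ (k + m)) := by
  induction m with
  | zero => rfl
  | succ m ih =>
    rw [← add_assoc, pow_succ', mul_eq_comp, range_comp, ← ih, ← range_comp, ← mul_eq_comp,
      ← pow_succ', h]

theorem range_pow_le_range_pow_mul_pow {T : Module.End R M} {k : ℕ}
    (h : range (T ^ k) = range (T ^ (k + 1))) : range (T ^ k) ≤ range (T ^ k * T ^ k) := by
  rw [← pow_add, ← range_pow_constant h k]

theorem ker_pow_mul_pow_le {K V : Type*} [DivisionRing K] [AddCommGroup V] [Module K V]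
    {T : Module.End K V} {k : ℕ} (h : ker (T ^ k) = ker (T ^ (k + 1))) :
    ker (T ^ k * T ^ k) ≤ ker (T ^ k) := by
  rw [← pow_add, ← ker_pow_constant h k]

end Module.End

namespace Polynomial

variable {R M : Type*} [CommRing R] [AddCommGroup M] [Module R M] (θ : Module.End R M)

theorem ker_aeval_le_of_dvd {p q : R[X]} (h : p ∣ q) : ker (aeval θ p) ≤ ker (aeval θ q) := by
  obtain ⟨r, rfl⟩ := h
  rw [mul_comm, map_mul, Module.End.mul_eq_comp]
  exact ker_le_ker_comp _ _

theorem range_aeval_le_of_dvd {p q : R[X]} (h : p ∣ q) :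
    range (aeval θ q) ≤ range (aeval θ p) := by
  obtain ⟨r, rfl⟩ := h
  rw [map_mul, Module.End.mul_eq_comp]
  exact range_comp_le_range _ _

theorem ker_aeval_le_range_aeval_of_isCoprime {p q : R[X]} (h : IsCoprime p q) :
    ker (aeval θ q) ≤ range (aeval θ p) := by
  obtain ⟨a, b, hab⟩ := h
  intro x hx
  refine ⟨aeval θ a x, ?_⟩
  have := congr_arg (fun r => aeval θ r x) hab
  simpa only [map_add, map_mul, map_one, LinearMap.add_apply, Module.End.mul_apply,
    Module.End.one_apply, mem_ker.1 hx, map_zero, add_zero, mul_comm a p] using this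

theorem ker_aeval_prod_eq_iSup {ι : Type*} (s : Finset ι) (p : ι → R[X])
    (h : (s : Set ι).Pairwise fun i j => IsCoprime (p i) (p j)) :
    ker (aeval θ (∏ i ∈ s, p i)) = ⨆ i ∈ s, ker (aeval θ (p i)) := by
  classical
  induction s using Finset.induction_on with
  | empty => simp [Module.End.one_eq_id]
  | insert a s ha ih =>
    rw [Finset.coe_insert, Set.pairwise_insert] at h
    have hcop : IsCoprime (p a) (∏ i ∈ s, p i) :=
      IsCoprime.prod_right fun i hi => (h.2 i hi fun hia => ha (hia ▸ hi)).1
    rw [Finset.prod_insert ha, ← sup_ker_aeval_eq_ker_aeval_mul_of_coprime θ hcop,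
      Finset.iSup_insert, ih h.1]

theorem ker_aeval_prod_mul_self_le {ι : Type*} (s : Finset ι) (p : ι → R[X])
    (h : ∀ i ∈ s, ker (aeval θ (p i) * aeval θ (p i)) ≤ ker (aeval θ (p i))) :
    ker (aeval θ (∏ i ∈ s, p i) * aeval θ (∏ i ∈ s, p i)) ≤
      ker (aeval θ (∏ i ∈ s, p i)) := by
  refine Finset.prod_induction p (fun q => ker (aeval θ q * aeval θ q) ≤ ker (aeval θ q))
    (fun q r hq hr => ?_) (by simp) h
  rw [map_mul]
  exact ((Commute.all q r).map (aeval θ)).ker_mul_mul_self_le hq hr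

theorem range_aeval_prod_le_range_mul_self {ι : Type*} (s : Finset ι) (p : ι → R[X])
    (h : ∀ i ∈ s, range (aeval θ (p i)) ≤ range (aeval θ (p i) * aeval θ (p i))) :
    range (aeval θ (∏ i ∈ s, p i)) ≤
      range (aeval θ (∏ i ∈ s, p i) * aeval θ (∏ i ∈ s, p i)) := by
  refine Finset.prod_induction p (fun q => range (aeval θ q) ≤ range (aeval θ q * aeval θ q))
    (fun q r hq hr => ?_) (by simp) h
  rw [map_mul]
  exact ((Commute.all q r).map (aeval θ)).range_mul_le_range_mul_mul_self hq hr

theorem isCoprime_of_monic_of_irreducible {K : Type*} [Field K] {f g : K[X]} (hf : f.Monic)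
    (hg : g.Monic) (hf' : Irreducible f) (hg' : Irreducible g) (hfg : f ≠ g) : IsCoprime f g :=
  hf'.coprime_iff_not_dvd.2 fun hdvd =>
    hfg (eq_of_monic_of_associated hf hg (hf'.associated_of_dvd hg' hdvd))

end Polynomial

theorem image_complete_decomposition_general
    {K V : Type*} [Field K] [AddCommGroup V] [Module K V]
    (θ : V →ₗ[K] V) (F : Finset (Polynomial K))
    (hF : ∀ f ∈ F, f.Monic ∧ Irreducible f)
    (c : Polynomial K → ℕ)
    (hker : ∀ f ∈ F, LinearMap.ker (Polynomial.aeval θ (f ^ c f)) =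
      LinearMap.ker (Polynomial.aeval θ (f ^ (c f + 1))))
    (hrange : ∀ f ∈ F, LinearMap.range (Polynomial.aeval θ (f ^ c f)) =
      LinearMap.range (Polynomial.aeval θ (f ^ (c f + 1)))) :
    iSupIndep (fun o : Option {f : Polynomial K // f ∈ F} =>
      Option.elim o
        (LinearMap.range (Polynomial.aeval θ (∏ f ∈ F, f ^ c f)))
        (fun f => LinearMap.ker (Polynomial.aeval θ (f.1 ^ c f.1)))) ∧
    (⨆ o : Option {f : Polynomial K // f ∈ F},
      Option.elim o
        (LinearMap.range (Polynomial.aeval θ (∏ f ∈ F, f ^ c f)))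
        (fun f => LinearMap.ker (Polynomial.aeval θ (f.1 ^ c f.1)))) = ⊤ := by
  set P := ∏ f ∈ F, f ^ c f
  have hcop : (F : Set K[X]).Pairwise fun f g => IsCoprime (f ^ c f) (g ^ c g) :=
    fun f hf g hg hfg =>
      (isCoprime_of_monic_of_irreducible (hF f hf).1 (hF g hg).1 (hF f hf).2 (hF g hg).2 hfg).pow
  have hkerF (f) (hf : f ∈ F) :
      ker (aeval θ (f ^ c f) * aeval θ (f ^ c f)) ≤ ker (aeval θ (f ^ c f)) := by
    simpa only [map_pow] using
      Module.End.ker_pow_mul_pow_le (by simpa only [map_pow] using hker f hf)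
  have hrangeF (f) (hf : f ∈ F) :
      range (aeval θ (f ^ c f)) ≤ range (aeval θ (f ^ c f) * aeval θ (f ^ c f)) := by
    simpa only [map_pow] using
      Module.End.range_pow_le_range_pow_mul_pow (by simpa only [map_pow] using hrange f hf)
  have hdvd (f) (hf : f ∈ F) : f ^ c f ∣ P := Finset.dvd_prod_of_mem _ hf
  refine ⟨iSupIndep_of_disjoint_of_le (u := fun o => Option.elim o (ker (aeval θ P))
    fun f => range (aeval θ (f.1 ^ c f.1))) ?_ ?_, ?_⟩
  · rintro (_ | f)
    · exact Module.End.disjoint_range_ker_of_ker_mul_self_le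
        (ker_aeval_prod_mul_self_le θ F _ hkerF)
    · exact (Module.End.disjoint_range_ker_of_ker_mul_self_le (hkerF f f.2)).symm
  · rintro (_ | f) (_ | g) hne
    · exact absurd rfl hne
    · exact ker_aeval_le_of_dvd θ (hdvd g g.2)
    · exact range_aeval_le_of_dvd θ (hdvd f f.2)
    · exact ker_aeval_le_range_aeval_of_isCoprime θ
        (hcop f.2 g.2 fun h => hne (congrArg some (Subtype.ext h)))
  · rw [iSup_option, eq_top_iff, ← Module.End.range_sup_ker_eq_top_of_range_le_range_mul_self
      (range_aeval_prod_le_range_mul_self θ F _ hrangeF), ker_aeval_prod_eq_iSup θ F _ hcop,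
      iSup_subtype']
    exact le_rfl

/-- Fact 2.8: if `θ` is a `C`-endomorphism which is
`C`-image-complete for the kernel configuration given by `c` on the finite set
`F` of pairwise distinct monic irreducible polynomials, then
`V = Im(F^C) ⊕ ⨁_{f ∈ F} Ker(f^C)` as an internal direct sum: the family
consisting of `range((∏_{f∈F} f^{c f})(θ))` together with the
`ker((f^{c f})(θ))` for `f ∈ F` is independent with supremum `⊤`. -/
theorem image_complete_decomposition
    {K V : Type*} [Field K] [AddCommGroup V] [Module K V]
    (θ : V →ₗ[K] V) (F : Finset (Polynomial K))
    (hF : ∀ f ∈ F, f.Monic ∧ Irreducible f)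
    (c : Polynomial K → ℕ) (hc : ∀ f ∈ F, 1 ≤ c f)
    (hker : ∀ f ∈ F, LinearMap.ker (Polynomial.aeval θ (f ^ c f)) =
      LinearMap.ker (Polynomial.aeval θ (f ^ (c f + 1))))
    (hrange : ∀ f ∈ F, LinearMap.range (Polynomial.aeval θ (f ^ c f)) =
      LinearMap.range (Polynomial.aeval θ (f ^ (c f + 1)))) :
    iSupIndep (fun o : Option {f : Polynomial K // f ∈ F} =>
      Option.elim o
        (LinearMap.range (Polynomial.aeval θ (∏ f ∈ F, f ^ c f)))
        (fun f => LinearMap.ker (Polynomial.aeval θ (f.1 ^ c f.1)))) ∧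
    (⨆ o : Option {f : Polynomial K // f ∈ F},
      Option.elim o
        (LinearMap.range (Polynomial.aeval θ (∏ f ∈ F, f ^ c f)))
        (fun f => LinearMap.ker (Polynomial.aeval θ (f.1 ^ c f.1)))) = ⊤ :=
  image_complete_decomposition_general θ F hF c hker hrange
end

section
/- Let K be a field, V' a K-vector space, V ⊆ V' a K-subspace such that the quotient V'/V has infinite dimension over K (Module.rank K (V'⧸V) ≥ ℵ₀), and let p ∈ K[X] be a monic polynomial of degree at least 1. If θ : V → V is a K-linear endomorphism with p(θ) = 0, then there exists a K-linear endomorphism θ' : V' → V' extending θ (θ'(v) = θ(v) for all v ∈ V) such that p(θ') = 0. -/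
/-!
Choose a complement `W` of `V`; it has infinite dimension `κ`. Since `deg p` is finite and
nonzero, `W ≅ (K[X]/(p))^(κ)`, and multiplication by the class of `X` is an endomorphism of the
latter annihilated by `p`. Then `θ ⊕ μ` on `V ⊕ W = V'` extends `θ` and is annihilated by `p`.
-/

open Cardinal Polynomial

theorem LinearMap.aeval_prodMap {R M N : Type*} [CommSemiring R] [AddCommMonoid M] [Module R M]
    [AddCommMonoid N] [Module R N] (f : Module.End R M) (g : Module.End R N) (p : R[X]) :
    aeval (f.prodMap g) p = (aeval f p).prodMap (aeval g p) := by
  have := aeval_algHom_apply (prodMapAlgHom R M N) (f, g) p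
  rwa [aeval_prod_apply] at this

theorem Submodule.exists_extend_aeval_eq_zero_of_isCompl {R E : Type*} [CommRing R]
    [AddCommGroup E] [Module R E] {V W : Submodule R E} (h : IsCompl V W) {p : R[X]}
    {θ : Module.End R V} (hθ : aeval θ p = 0) {μ : Module.End R W} (hμ : aeval μ p = 0) :
    ∃ θ' : Module.End R E, (∀ v : V, θ' v = θ v) ∧ aeval θ' p = 0 := by
  let e := prodEquivOfIsCompl V W h
  refine ⟨e.conjAlgEquiv R (θ.prodMap μ), fun v ↦ by simp [e], ?_⟩
  rw [aeval_algHom_apply, LinearMap.aeval_prodMap, hθ, hμ, LinearMap.prodMap_zero, map_zero]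

section

variable {K : Type*} [Field K]

theorem nonempty_linearEquiv_finsupp_of_finrank_pos {A W : Type*} [AddCommGroup A] [Module K A]
    [AddCommGroup W] [Module K W] (hA : 0 < Module.finrank K A) (hW : ℵ₀ ≤ Module.rank K W) :
    Nonempty (W ≃ₗ[K] (Module.Basis.ofVectorSpaceIndex K W →₀ A)) := by
  have := Module.finite_of_finrank_pos hA
  have hι : #_ = Module.rank K W := (Module.Basis.ofVectorSpace K W).mk_eq_rank''
  apply nonempty_linearEquiv_of_lift_rank_eq
  rw [rank_finsupp, hι, ← Module.finrank_eq_rank (R := K) (M := A), lift_mul, lift_lift,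
    lift_lift, lift_natCast, mul_eq_left]
  · simpa using hW
  · simpa using (natCast_lt_aleph0.trans_le hW).le
  · simpa using hA.ne'

theorem exists_aeval_eq_zero_of_aleph0_le_rank {W : Type*} [AddCommGroup W] [Module K W]
    (hW : ℵ₀ ≤ Module.rank K W) {p : K[X]} (hp : 0 < p.natDegree) :
    ∃ μ : Module.End K W, aeval μ p = 0 := by
  have hp₀ : p ≠ 0 := ne_zero_of_natDegree_gt hp
  obtain ⟨e⟩ := nonempty_linearEquiv_finsupp_of_finrank_pos
    (hp.trans_eq (AdjoinRoot.powerBasis hp₀).finrank.symm) hW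
  refine ⟨e.symm.conjAlgEquiv K (Algebra.lsmul K K _ (AdjoinRoot.root p)), ?_⟩
  rw [aeval_algHom_apply, aeval_algHom_apply, AdjoinRoot.aeval_eq, AdjoinRoot.mk_self, map_zero,
    map_zero]

end

theorem extend_endomorphism_algebraic_general
    {K V' : Type*} [Field K] [AddCommGroup V'] [Module K V']
    (V : Submodule K V')
    (hrank : Cardinal.aleph0 ≤ Module.rank K (V' ⧸ V))
    (p : Polynomial K) (hdeg : 1 ≤ p.natDegree)
    (θ : V →ₗ[K] V) (hθ : Polynomial.aeval θ p = 0) :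
    ∃ θ' : V' →ₗ[K] V',
      (∀ v : V, θ' ↑v = ↑(θ v)) ∧ Polynomial.aeval θ' p = 0 := by
  obtain ⟨W, hW⟩ := V.exists_isCompl
  obtain ⟨μ, hμ⟩ := exists_aeval_eq_zero_of_aleph0_le_rank
    ((V.quotientEquivOfIsCompl W hW).rank_eq ▸ hrank) hdeg
  exact Submodule.exists_extend_aeval_eq_zero_of_isCompl hW hθ hμ

/-- Standard Construction, algebraic case: a `K`-linear
endomorphism `θ` of a subspace `V ⊆ V'` with `p(θ) = 0`, where `p` is monic of
degree at least `1` and `dim(V'/V) ≥ ℵ₀`, extends to a `K`-linear endomorphism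
`θ'` of `V'` with `p(θ') = 0`. -/
theorem extend_endomorphism_algebraic
    {K V' : Type*} [Field K] [AddCommGroup V'] [Module K V']
    (V : Submodule K V')
    (hrank : Cardinal.aleph0 ≤ Module.rank K (V' ⧸ V))
    (p : Polynomial K) (hmonic : p.Monic) (hdeg : 1 ≤ p.natDegree)
    (θ : V →ₗ[K] V) (hθ : Polynomial.aeval θ p = 0) :
    ∃ θ' : V' →ₗ[K] V',
      (∀ v : V, θ' ↑v = ↑(θ v)) ∧ Polynomial.aeval θ' p = 0 :=
  extend_endomorphism_algebraic_general V hrank p hdeg θ hθ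
end
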